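/- Let V = ℂ³ with basis {u | v, h} (u even; v, h odd), bracket [u,v] = h (and [v,u] = -h, all others zero). Suppose α(u) = μ₀ u, α(v) = μ₁₁ v + μ₂₁ h, α(h) = μ₀μ₁₁ h with μ₂₁ ≠ 0, μ₀ ≠ 1, and μ₁₁ ≠ 0. Then there exists an even linear automorphism φ of V with φ([x,y]) = [φ(x),φ(y)] for all x,y such that φ ∘ α ∘ φ⁻¹ is diagonal: (φαφ⁻¹)(u) = μ₀ u, (φαφ⁻¹)(v) = μ₁₁ v, (φαφ⁻¹)(h) = μ₀μ₁₁ h. -/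

import Mathlib

namespace Stmt2

/-- V = ℂ³ with basis u = e₀ (even), v = e₁, h = e₂ (odd). -/
abbrev V : Type := Fin 3 → ℂ

/-- super bracket: [u,v] = h = -[v,u], all other brackets of basis elements zero. -/
def br (x y : V) : V := ![0, 0, x 0 * y 1 - x 1 * y 0]

/-- α(u)=μ₀u, α(v)=μ₁₁v+μ₂₁h, α(h)=μ₀μ₁₁h. -/
def al (μ0 μ11 μ21 : ℂ) (x : V) : V :=
  ![μ0 * x 0, μ11 * x 1, μ21 * x 1 + μ0 * μ11 * x 2]

/-- the diagonal map diag(μ₀, μ₁₁, μ₀μ₁₁). -/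
def ad (μ0 μ11 : ℂ) (x : V) : V := ![μ0 * x 0, μ11 * x 1, μ0 * μ11 * x 2]

def IsLin (f : V → V) : Prop := ∀ (c : ℂ) (x y : V), f (c • x + y) = c • f x + f y

/-- even map: preserves the grading (coord 0 even, coords 1,2 odd). -/
def IsEven (f : V → V) : Prop :=
  ∀ x : V, ((x 1 = 0 ∧ x 2 = 0) → ((f x) 1 = 0 ∧ (f x) 2 = 0)) ∧ (x 0 = 0 → (f x) 0 = 0)

/-! The conjugating map is a shear `v ↦ v + c h`. A bracket depends only on the
`u`- and `v`-coordinates and takes values in `ℂ h`, all of which a shear leaves alone, so every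
shear respects the bracket; `c` is then chosen to cancel the `μ₂₁ h`
component of `α(v)`, which forces `c μ₁₁ (μ₀ - 1) = μ₂₁`. -/

def shear (c : ℂ) (x : V) : V := ![x 0, x 1, c * x 1 + x 2]

theorem shear_isLin (c : ℂ) : IsLin (shear c) := by
  intro k x y
  funext i
  fin_cases i <;> simp [shear]
  ring

theorem shear_isEven (c : ℂ) : IsEven (shear c) := by
  intro x
  exact ⟨fun ⟨h1, h2⟩ => by simp [shear, h1, h2], fun h => by simp [shear, h]⟩

theorem shear_shear (a b : ℂ) (x : V) : shear a (shear b x) = shear (a + b) x := by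
  funext i
  fin_cases i <;> simp [shear]
  ring

theorem shear_zero (x : V) : shear 0 x = x := by
  funext i
  fin_cases i <;> simp [shear]

theorem shear_bijective (c : ℂ) : Function.Bijective (shear c) :=
  Function.bijective_iff_has_inverse.mpr
    ⟨shear (-c), fun x => by rw [shear_shear, neg_add_cancel, shear_zero],
      fun x => by rw [shear_shear, add_neg_cancel, shear_zero]⟩

theorem shear_br (c : ℂ) (x y : V) : shear c (br x y) = br (shear c x) (shear c y) := by
  funext i
  fin_cases i <;> simp [shear, br]

theorem shear_al {μ0 μ11 μ21 c : ℂ} (hc : c * μ11 + μ21 = μ0 * μ11 * c) (x : V) :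
    shear c (al μ0 μ11 μ21 x) = ad μ0 μ11 (shear c x) := by
  funext i
  fin_cases i <;> simp [shear, al, ad]
  linear_combination x 1 * hc

theorem stmt2_general (μ0 μ11 μ21 : ℂ) (h0 : μ0 ≠ 1) (h11 : μ11 ≠ 0) :
    ∃ φ : V → V, IsLin φ ∧ IsEven φ ∧ Function.Bijective φ ∧
      (∀ x y : V, φ (br x y) = br (φ x) (φ y)) ∧
      (∀ x : V, φ (al μ0 μ11 μ21 x) = ad μ0 μ11 (φ x)) := by
  have hc : μ21 / ((μ0 - 1) * μ11) * μ11 + μ21 = μ0 * μ11 * (μ21 / ((μ0 - 1) * μ11)) := by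
    have : μ0 - 1 ≠ 0 := sub_ne_zero.mpr h0
    field_simp
    ring
  exact ⟨shear _, shear_isLin _, shear_isEven _, shear_bijective _, shear_br _, shear_al hc⟩

theorem stmt2 (μ0 μ11 μ21 : ℂ) (h21 : μ21 ≠ 0) (h0 : μ0 ≠ 1) (h11 : μ11 ≠ 0) :
    ∃ φ : V → V, IsLin φ ∧ IsEven φ ∧ Function.Bijective φ ∧
      (∀ x y : V, φ (br x y) = br (φ x) (φ y)) ∧
      (∀ x : V, φ (al μ0 μ11 μ21 x) = ad μ0 μ11 (φ x)) :=
  stmt2_general μ0 μ11 μ21 h0 h11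

end Stmt2
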